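/- Let n ≥ 1 and φ_C := G(◇_s(C_n ∧ p ∧ X G ¬p)). For every SLTL model M = (Π, λ) and every σ ∈ Π such that M, σ, 0 ⊨ φ_C, for every position i > 2ⁿ there exist traces σ₁,…,σ_{2ⁿ} ∈ Π such that the sets σ_j(i) ∩ {p₁,…,p_n} for j ∈ {1,…,2ⁿ} are pairwise distinct, i.e. |{σ_j(i) ∩ {p₁,…,p_n} | j ∈ {1,…,2ⁿ}}| = 2ⁿ. -/
import Mathlib


/-! ### SLTL: syntax, models, satisfaction -/

inductive SForm : Type where
  | var : ℕ → SForm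
  | le : ℕ → ℕ → SForm
  | tru : SForm
  | fls : SForm
  | neg : SForm → SForm
  | conj : SForm → SForm → SForm
  | dia : ℕ → SForm → SForm
  | box : ℕ → SForm → SForm
  | next : SForm → SForm
  | until_ : SForm → SForm → SForm

/-- Traces: ω-sequences of propositional valuations. -/
abbrev Trace := ℕ → Set ℕ

/-- An SLTL model `(Π, λ)`; standpoint symbols are natural numbers, `0` is the
universal standpoint `*`. -/
structure SLTLModel where
  Pi : Set Trace
  lam : ℕ → Set Trace
  pi_nonempty : Pi.Nonempty
  lam_sub : ∀ s, lam s ⊆ Pi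
  lam_nonempty : ∀ s, (lam s).Nonempty
  lam_star : lam 0 = Pi

def SSat (M : SLTLModel) : SForm → Trace → ℕ → Prop
  | .var p, σ, i => p ∈ σ i
  | .le s s', _, _ => M.lam s ⊆ M.lam s'
  | .tru, _, _ => True
  | .fls, _, _ => False
  | .neg a, σ, i => ¬ SSat M a σ i
  | .conj a b, σ, i => SSat M a σ i ∧ SSat M b σ i
  | .dia s a, _, i => ∃ σ' ∈ M.lam s, SSat M a σ' i
  | .box s a, _, i => ∀ σ' ∈ M.lam s, SSat M a σ' i
  | .next a, σ, i => SSat M a σ (i + 1)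
  | .until_ a b, σ, i =>
      ∃ i', i ≤ i' ∧ SSat M b σ i' ∧ ∀ i'', i ≤ i'' → i'' < i' → SSat M a σ i''

def SLTLSatisfiable (φ : SForm) : Prop :=
  ∃ M : SLTLModel, ∃ σ ∈ M.Pi, SSat M φ σ 0

def SForm.impl (a b : SForm) : SForm := .neg (.conj a (.neg b))
def SForm.iffc (a b : SForm) : SForm := .conj (a.impl b) (b.impl a)
/-- `G φ := ¬(⊤ U ¬φ)`. -/
def SForm.G (a : SForm) : SForm := .neg (.until_ .tru (.neg a))
def bigAnd (l : List SForm) : SForm := l.foldr .conj .tru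
/-- The list `[a, a+1, …, b]`. -/
def listIcc (a b : ℕ) : List ℕ := (List.range (b + 1 - a)).map (fun k => a + k)

/-- Propositional variables occurring in a formula. -/
def varsSF : SForm → Finset ℕ
  | .var p => {p}
  | .le _ _ => ∅
  | .tru => ∅
  | .fls => ∅
  | .neg a => varsSF a
  | .conj a b => varsSF a ∪ varsSF b
  | .dia _ a => varsSF a
  | .box _ a => varsSF a
  | .next a => varsSF a
  | .until_ a b => varsSF a ∪ varsSF b

/-- Standpoint symbols occurring in a formula. -/
def standsSF : SForm → Finset ℕ
  | .var _ => ∅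
  | .le s s' => {s, s'}
  | .tru => ∅
  | .fls => ∅
  | .neg a => standsSF a
  | .conj a b => standsSF a ∪ standsSF b
  | .dia s a => insert s (standsSF a)
  | .box s a => insert s (standsSF a)
  | .next a => standsSF a
  | .until_ a b => standsSF a ∪ standsSF b

/-- No temporal connective (`X` or `U`) occurs in the formula. -/
def noTemp : SForm → Prop
  | .neg a => noTemp a
  | .conj a b => noTemp a ∧ noTemp b
  | .dia _ a => noTemp a
  | .box _ a => noTemp a
  | .next _ => False
  | .until_ _ _ => False
  | _ => True

/-- The fragment LTL∨PSL: no temporal connective occurs within the scope of a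
standpoint modality. -/
def isLTLPSL : SForm → Prop
  | .neg a => isLTLPSL a
  | .conj a b => isLTLPSL a ∧ isLTLPSL b
  | .dia _ a => noTemp a
  | .box _ a => noTemp a
  | .next a => isLTLPSL a
  | .until_ a b => isLTLPSL a ∧ isLTLPSL b
  | _ => True

def sizeSF : SForm → ℕ
  | .var _ => 1
  | .le _ _ => 1
  | .tru => 1
  | .fls => 1
  | .neg a => sizeSF a + 1
  | .conj a b => sizeSF a + sizeSF b + 1
  | .dia _ a => sizeSF a + 1
  | .box _ a => sizeSF a + 1
  | .next a => sizeSF a + 1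
  | .until_ a b => sizeSF a + sizeSF b + 1

/-! ### The binary-counter formula `C_n` and `φ_C` -/

/-- `¬p₁ ∧ ⋯ ∧ ¬p_n`, where `p_i := pv i`. -/
def allZero (n : ℕ) (pv : ℕ → ℕ) : SForm :=
  bigAnd ((listIcc 1 n).map (fun i => SForm.neg (SForm.var (pv i))))

/-- `p₁ ∧ ⋯ ∧ p_n`. -/
def allOne (n : ℕ) (pv : ℕ → ℕ) : SForm :=
  bigAnd ((listIcc 1 n).map (fun i => SForm.var (pv i)))

/-- The binary-counter formula `C_n` over variables `p_i := pv i`, `1 ≤ i ≤ n`,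
with `p₁` the most significant bit. -/
def Cn (n : ℕ) (pv : ℕ → ℕ) : SForm :=
  SForm.conj (allZero n pv)
    (SForm.conj (SForm.G (SForm.impl (allOne n pv) (SForm.next (allZero n pv))))
      (bigAnd ((listIcc 1 n).map (fun i =>
        SForm.G (SForm.impl
          (SForm.conj (SForm.neg (SForm.var (pv i)))
            (bigAnd ((listIcc (i + 1) n).map (fun i' => SForm.var (pv i')))))
          (SForm.conj
            (bigAnd ((listIcc (i + 1) n).map (fun i' => SForm.next (SForm.neg (SForm.var (pv i'))))))
            (SForm.conj (SForm.next (SForm.var (pv i)))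
              (bigAnd ((listIcc 1 (i - 1)).map (fun i' =>
                SForm.iffc (SForm.var (pv i')) (SForm.next (SForm.var (pv i')))))))))))))

/-- `φ_C := G(◇_s(C_n ∧ p ∧ X G ¬p))`, where `p := p0`. -/
def phiC (n : ℕ) (pv : ℕ → ℕ) (p0 s : ℕ) : SForm :=
  SForm.G (SForm.dia s (SForm.conj (Cn n pv)
    (SForm.conj (SForm.var p0) (SForm.next (SForm.G (SForm.neg (SForm.var p0)))))))

open Classical in
/-- The value of the counter at position `i` of trace `σ`: the number whose
`n`-bit binary representation `b₁…b_n` (with `b₁` most significant) is given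
by `b_j = 1` iff `pv j ∈ σ i`.  `σ, i ⊨ C=m` means `cval n pv σ i = m`. -/
noncomputable def cval (n : ℕ) (pv : ℕ → ℕ) (σ : Trace) (i : ℕ) : ℕ :=
  ∑ j ∈ Finset.Icc 1 n, if pv j ∈ σ i then 2 ^ (n - j) else 0

section Aux

lemma SSat_bigAnd {M : SLTLModel} {l : List SForm} {σ : Trace} {i : ℕ} :
    SSat M (bigAnd l) σ i ↔ ∀ a ∈ l, SSat M a σ i := by
  induction l with
  | nil => simp [bigAnd, SSat]
  | cons a l ih =>
    show SSat M (.conj a (bigAnd l)) σ i ↔ _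
    simp [SSat, ih]

lemma mem_listIcc {k a b : ℕ} : k ∈ listIcc a b ↔ a ≤ k ∧ k ≤ b := by
  simp only [listIcc, List.mem_map, List.mem_range]
  constructor
  · rintro ⟨x, h1, rfl⟩; omega
  · intro ⟨h1, h2⟩; exact ⟨k - a, by omega, by omega⟩

lemma SSat_G {M : SLTLModel} {a : SForm} {σ : Trace} {i : ℕ} :
    SSat M (SForm.G a) σ i ↔ ∀ i', i ≤ i' → SSat M a σ i' := by
  simp only [SForm.G, SSat]
  constructor
  · intro h i' hi
    by_contra hc
    exact h ⟨i', hi, hc, fun _ _ _ => trivial⟩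
  · rintro h ⟨i', hi, hna, -⟩
    exact hna (h i' hi)

lemma SSat_impl {M : SLTLModel} {a b : SForm} {σ : Trace} {i : ℕ} :
    SSat M (a.impl b) σ i ↔ (SSat M a σ i → SSat M b σ i) := by
  simp only [SForm.impl, SSat]; tauto

lemma SSat_allZero {M : SLTLModel} {n : ℕ} {pv : ℕ → ℕ} {σ : Trace} {i : ℕ} :
    SSat M (allZero n pv) σ i ↔ ∀ j, 1 ≤ j → j ≤ n → pv j ∉ σ i := by
  simp only [allZero, SSat_bigAnd, List.mem_map]
  constructor
  · intro h j h1 h2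
    have := h _ ⟨j, mem_listIcc.mpr ⟨h1, h2⟩, rfl⟩
    simpa [SSat] using this
  · rintro h a ⟨j, hj, rfl⟩
    rw [mem_listIcc] at hj
    simpa [SSat] using h j hj.1 hj.2

lemma SSat_allOne {M : SLTLModel} {n : ℕ} {pv : ℕ → ℕ} {σ : Trace} {i : ℕ} :
    SSat M (allOne n pv) σ i ↔ ∀ j, 1 ≤ j → j ≤ n → pv j ∈ σ i := by
  simp only [allOne, SSat_bigAnd, List.mem_map]
  constructor
  · intro h j h1 h2
    have := h _ ⟨j, mem_listIcc.mpr ⟨h1, h2⟩, rfl⟩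
    simpa [SSat] using this
  · rintro h a ⟨j, hj, rfl⟩
    rw [mem_listIcc] at hj
    simpa [SSat] using h j hj.1 hj.2

lemma sum_pow_Icc : ∀ m a n : ℕ, n = a + m →
    ∑ j ∈ Finset.Icc (a+1) n, 2^(n-j) = 2^m - 1 := by
  intro m
  induction m with
  | zero =>
    intro a n h
    rw [Finset.Icc_eq_empty (by omega)]
    simp
  | succ m ih =>
    intro a n h
    have h1 : Finset.Icc (a+1) n = insert (a+1) (Finset.Icc (a+2) n) := by
      ext x; simp only [Finset.mem_Icc, Finset.mem_insert]; omega
    rw [h1, Finset.sum_insert (by intro hx; simp only [Finset.mem_Icc] at hx; omega)]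
    rw [ih (a+1) n (by omega)]
    have e : n - (a+1) = m := by omega
    rw [e]
    have h2 : 1 ≤ 2^m := Nat.one_le_two_pow
    have h3 : 2^(m+1) = 2*2^m := by ring
    omega

lemma cval_le {n : ℕ} {pv : ℕ → ℕ} {σ : Trace} {i : ℕ} :
    cval n pv σ i ≤ 2^n - 1 := by
  have : cval n pv σ i ≤ ∑ j ∈ Finset.Icc 1 n, 2^(n-j) := by
    apply Finset.sum_le_sum
    intro j _
    split <;> simp
  calc cval n pv σ i ≤ _ := this
    _ = 2^n - 1 := by
        have := sum_pow_Icc n 0 n (by omega)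
        simpa using this

end Aux
section Counter
variable {M : SLTLModel} {n : ℕ} {pv : ℕ → ℕ} {σ' : Trace} {k : ℕ}

lemma Cn_zero (hC : SSat M (Cn n pv) σ' k) :
    ∀ j, 1 ≤ j → j ≤ n → pv j ∉ σ' k := by
  have h0 : SSat M (allZero n pv) σ' k := hC.1
  exact SSat_allZero.mp h0

lemma Cn_wrap (hC : SSat M (Cn n pv) σ' k) :
    ∀ i, k ≤ i → (∀ j, 1 ≤ j → j ≤ n → pv j ∈ σ' i) →
      ∀ j, 1 ≤ j → j ≤ n → pv j ∉ σ' (i+1) := by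
  have h1 : SSat M (SForm.G (SForm.impl (allOne n pv) (SForm.next (allZero n pv)))) σ' k :=
    hC.2.1
  intro i hik hall
  have := SSat_impl.mp (SSat_G.mp h1 i hik) (SSat_allOne.mpr hall)
  exact SSat_allZero.mp this

lemma Cn_incr (hC : SSat M (Cn n pv) σ' k) :
    ∀ i₀, 1 ≤ i₀ → i₀ ≤ n → ∀ i, k ≤ i →
      pv i₀ ∉ σ' i → (∀ j, i₀+1 ≤ j → j ≤ n → pv j ∈ σ' i) →
      (∀ j, i₀+1 ≤ j → j ≤ n → pv j ∉ σ' (i+1)) ∧ pv i₀ ∈ σ' (i+1) ∧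
      (∀ j, 1 ≤ j → j ≤ i₀ - 1 → (pv j ∈ σ' i ↔ pv j ∈ σ' (i+1))) := by
  have h2 := hC.2.2
  intro i₀ h1 h2' i hik hz hones
  have hmem := (SSat_bigAnd.mp h2) _ (List.mem_map.mpr ⟨i₀, mem_listIcc.mpr ⟨h1, h2'⟩, rfl⟩)
  have hG := SSat_G.mp hmem i hik
  have hant : SSat M (SForm.conj (SForm.neg (SForm.var (pv i₀)))
      (bigAnd ((listIcc (i₀ + 1) n).map (fun i' => SForm.var (pv i'))))) σ' i := by
    refine ⟨hz, ?_⟩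
    rw [SSat_bigAnd]
    intro a ha
    obtain ⟨j, hj, rfl⟩ := List.mem_map.mp ha
    rw [mem_listIcc] at hj
    exact hones j hj.1 hj.2
  have hcons := SSat_impl.mp hG hant
  obtain ⟨hA, hB, hCpre⟩ := hcons
  refine ⟨?_, hB, ?_⟩
  · intro j hj1 hj2
    have := (SSat_bigAnd.mp hA) _ (List.mem_map.mpr ⟨j, mem_listIcc.mpr ⟨hj1, hj2⟩, rfl⟩)
    simpa [SSat] using this
  · intro j hj1 hj2
    have := (SSat_bigAnd.mp hCpre) _ (List.mem_map.mpr ⟨j, mem_listIcc.mpr ⟨hj1, hj2⟩, rfl⟩)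
    simp only [SForm.iffc, SForm.impl, SSat] at this
    tauto

end Counter
section Step
variable {M : SLTLModel} {n : ℕ} {pv : ℕ → ℕ} {σ' : Trace} {k : ℕ}

lemma cval_step (hC : SSat M (Cn n pv) σ' k) {i : ℕ} (hik : k ≤ i) :
    cval n pv σ' (i+1) = (cval n pv σ' i + 1) % 2^n := by
  classical
  by_cases hall : ∀ j, 1 ≤ j → j ≤ n → pv j ∈ σ' i
  · have hz1 := Cn_wrap hC i hik hall
    have e1 : cval n pv σ' (i+1) = 0 := by
      apply Finset.sum_eq_zero
      intro j hj
      simp only [Finset.mem_Icc] at hj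
      simp [hz1 j hj.1 hj.2]
    have e2 : cval n pv σ' i = 2^n - 1 := by
      have e2' : cval n pv σ' i = ∑ j ∈ Finset.Icc 1 n, 2^(n-j) := by
        unfold cval
        apply Finset.sum_congr rfl
        intro j hj
        simp only [Finset.mem_Icc] at hj
        simp [hall j hj.1 hj.2]
      rw [e2']
      simpa using sum_pow_Icc n 0 n (by omega)
    rw [e1, e2]
    have h2 : 1 ≤ 2^n := Nat.one_le_two_pow
    rw [Nat.sub_add_cancel h2, Nat.mod_self]
  · push_neg at hall
    obtain ⟨j₀, hj₀1, hj₀2, hj₀3⟩ := hall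
    set S := (Finset.Icc 1 n).filter (fun j => pv j ∉ σ' i) with hS
    have hSne : S.Nonempty := ⟨j₀, by simp [hS, Finset.mem_Icc, hj₀1, hj₀2, hj₀3]⟩
    set i₀ := S.max' hSne with hi₀def
    have hi₀S : i₀ ∈ S := S.max'_mem hSne
    have hi₀mem : 1 ≤ i₀ ∧ i₀ ≤ n ∧ pv i₀ ∉ σ' i := by
      simp only [hS, Finset.mem_filter, Finset.mem_Icc] at hi₀S
      tauto
    have hmax : ∀ j, i₀ + 1 ≤ j → j ≤ n → pv j ∈ σ' i := by
      intro j hj1 hj2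
      by_contra hc
      have : j ∈ S := by
        simp only [hS, Finset.mem_filter, Finset.mem_Icc]
        exact ⟨⟨by omega, hj2⟩, hc⟩
      have := S.le_max' j this
      omega
    obtain ⟨hA, hB, hCpre⟩ := Cn_incr hC i₀ hi₀mem.1 hi₀mem.2.1 i hik hi₀mem.2.2 hmax
    have key : cval n pv σ' (i+1) + ∑ j ∈ Finset.Icc 1 n, (if i₀ < j then 2^(n-j) else 0)
        = cval n pv σ' i + ∑ j ∈ Finset.Icc 1 n, (if j = i₀ then 2^(n-j) else 0) := by
      unfold cval
      rw [← Finset.sum_add_distrib, ← Finset.sum_add_distrib]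
      apply Finset.sum_congr rfl
      intro j hj
      simp only [Finset.mem_Icc] at hj
      rcases lt_trichotomy j i₀ with hlt | heq | hgt
      · have hc := hCpre j hj.1 (by omega)
        have hne : j ≠ i₀ := by omega
        have hnlt : ¬ i₀ < j := by omega
        by_cases hm : pv j ∈ σ' i
        · simp [hm, hc.mp hm, hne, hnlt]
        · have hm2 : pv j ∉ σ' (i+1) := fun hx => hm (hc.mpr hx)
          simp [hm, hm2, hne, hnlt]
      · subst heq
        simp [hi₀mem.2.2, hB]
      · have h1 := hA j (by omega) hj.2
        have h2 := hmax j (by omega) hj.2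
        have hne : j ≠ i₀ := by omega
        simp [h1, h2, hgt, hne]
    have g1 : ∑ j ∈ Finset.Icc 1 n, (if i₀ < j then 2^(n-j) else 0) = 2^(n-i₀) - 1 := by
      rw [← Finset.sum_filter]
      have : (Finset.Icc 1 n).filter (fun j => i₀ < j) = Finset.Icc (i₀+1) n := by
        ext x; simp only [Finset.mem_filter, Finset.mem_Icc]; omega
      rw [this]
      exact sum_pow_Icc (n - i₀) i₀ n (by omega)
    have g2 : ∑ j ∈ Finset.Icc 1 n, (if j = i₀ then 2^(n-j) else 0) = 2^(n-i₀) := by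
      rw [Finset.sum_ite_eq' (Finset.Icc 1 n) i₀ (fun j => 2^(n-j))]
      simp [Finset.mem_Icc, hi₀mem.1, hi₀mem.2.1]
    rw [g1, g2] at key
    have b1 : cval n pv σ' (i+1) ≤ 2^n - 1 := cval_le
    have b2 : 1 ≤ 2^(n-i₀) := Nat.one_le_two_pow
    have b3 : 1 ≤ 2^n := Nat.one_le_two_pow
    have hlt : cval n pv σ' i + 1 < 2^n := by omega
    rw [Nat.mod_eq_of_lt hlt]
    omega

lemma counter_val (hC : SSat M (Cn n pv) σ' k) :
    ∀ d, cval n pv σ' (k + d) = d % 2^n := by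
  intro d
  induction d with
  | zero =>
    have hz := Cn_zero hC
    have : cval n pv σ' k = 0 := by
      apply Finset.sum_eq_zero
      intro j hj
      simp only [Finset.mem_Icc] at hj
      simp [hz j hj.1 hj.2]
    simpa using this
  | succ d ih =>
    have : k + (d + 1) = (k + d) + 1 := by omega
    rw [this, cval_step hC (by omega), ih, Nat.mod_add_mod]

end Step
/-- For every SLTL model `M = (Π, λ)` and `σ ∈ Π` with
`M, σ, 0 ⊨ φ_C`, for every position `i > 2ⁿ` there are traces
`σ₁, …, σ_{2ⁿ} ∈ Π` whose restrictions `σ_j(i) ∩ {p₁,…,p_n}` are pairwise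
distinct (equivalently, `|{σ_j(i) ∩ {p₁,…,p_n} | 1 ≤ j ≤ 2ⁿ}| = 2ⁿ`). -/
theorem stmt9 (n : ℕ) (hn : 1 ≤ n) (pv : ℕ → ℕ)
    (hinj : ∀ i ∈ Finset.Icc 1 n, ∀ j ∈ Finset.Icc 1 n, pv i = pv j → i = j)
    (p0 : ℕ) (hp0 : ∀ i ∈ Finset.Icc 1 n, pv i ≠ p0) (s : ℕ)
    (M : SLTLModel) (σ : Trace) (hσ : σ ∈ M.Pi)
    (h : SSat M (phiC n pv p0 s) σ 0) :
    ∀ i, 2 ^ n < i → ∃ f : Fin (2 ^ n) → Trace,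
      (∀ j, f j ∈ M.Pi) ∧
      Function.Injective
        (fun j : Fin (2 ^ n) => f j i ∩ (((Finset.Icc 1 n).image pv : Finset ℕ) : Set ℕ)) := by
  intro i hi
  have hkey : ∀ k, ∃ σ', σ' ∈ M.Pi ∧ SSat M (Cn n pv) σ' k := by
    intro k
    have hG := SSat_G.mp h k (Nat.zero_le k)
    obtain ⟨σ', hσ'l, hσ's⟩ := hG
    exact ⟨σ', M.lam_sub s hσ'l, hσ's.1⟩
  choose τ hτPi hτC using hkey
  refine ⟨fun j => τ (i - (j.val + 1)), fun j => hτPi _, ?_⟩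
  intro j j' hjj'
  have hc : ∀ (j : Fin (2^n)), cval n pv (τ (i - (j.val + 1))) i = (j.val + 1) % 2^n := by
    intro j
    have hk : i - (j.val + 1) + (j.val + 1) = i := by
      have := j.isLt; omega
    have := counter_val (hτC (i - (j.val + 1))) (j.val + 1)
    rwa [hk] at this
  have hjj2 : τ (i - (j.val + 1)) i ∩ (((Finset.Icc 1 n).image pv : Finset ℕ) : Set ℕ)
      = τ (i - (j'.val + 1)) i ∩ (((Finset.Icc 1 n).image pv : Finset ℕ) : Set ℕ) := hjj'
  have hdep : cval n pv (τ (i - (j.val + 1))) i = cval n pv (τ (i - (j'.val + 1))) i := by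
    unfold cval
    apply Finset.sum_congr rfl
    intro t ht
    have hmem : pv t ∈ (((Finset.Icc 1 n).image pv : Finset ℕ) : Set ℕ) := by
      simp only [Finset.coe_image, Set.mem_image, Finset.mem_coe]
      exact ⟨t, ht, rfl⟩
    have hiff : pv t ∈ τ (i - (j.val + 1)) i ↔ pv t ∈ τ (i - (j'.val + 1)) i := by
      constructor
      · intro hx
        have : pv t ∈ τ (i - (j.val + 1)) i ∩ _ := ⟨hx, hmem⟩
        rw [hjj2] at this
        exact this.1
      · intro hx
        have : pv t ∈ τ (i - (j'.val + 1)) i ∩ _ := ⟨hx, hmem⟩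
        rw [← hjj2] at this
        exact this.1
    by_cases hx : pv t ∈ τ (i - (j.val + 1)) i
    · simp [hx, hiff.mp hx]
    · have hx2 : pv t ∉ τ (i - (j'.val + 1)) i := fun hy => hx (hiff.mpr hy)
      simp [hx, hx2]
  rw [hc j, hc j'] at hdep
  have hjl := j.isLt
  have hj'l := j'.isLt
  have e1 : (j.val + 1) % 2^n = if j.val + 1 = 2^n then 0 else j.val + 1 := by
    split
    · rename_i hx; rw [hx, Nat.mod_self]
    · exact Nat.mod_eq_of_lt (by omega)
  have e2 : (j'.val + 1) % 2^n = if j'.val + 1 = 2^n then 0 else j'.val + 1 := by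
    split
    · rename_i hx; rw [hx, Nat.mod_self]
    · exact Nat.mod_eq_of_lt (by omega)
  rw [e1, e2] at hdep
  apply Fin.ext
  split_ifs at hdep <;> omega
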